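/- arXiv:2506.02520 — 8 statements merged into one kernel-verified Lean document; each statement's English description precedes it below -/
import Mathlib

section
/- Let f be a concave function on ℝ^n and P a polyhedron such that f attains its minimum over P. Then the set of minimizers of f over P is a union of faces of P. -/
/-- the set of minimizers of a concave function over a polyhedron
(assuming the minimum is attained) is a union of faces of the polyhedron. -/
theorem stmt_3 {n m : ℕ} (A : Fin m → (EuclideanSpace ℝ (Fin n) →ₗ[ℝ] ℝ))
    (b : Fin m → ℝ)
    (P : Set (EuclideanSpace ℝ (Fin n))) (hP : P = {x | ∀ j, A j x ≤ b j})
    (f : EuclideanSpace ℝ (Fin n) → ℝ) (hf : ConcaveOn ℝ Set.univ f)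
    (hattain : ∃ x ∈ P, ∀ y ∈ P, f x ≤ f y) :
    ∃ 𝓕 : Set (Set (EuclideanSpace ℝ (Fin n))),
      (∀ F ∈ 𝓕, ∃ E : Set (Fin m), F = {x ∈ P | ∀ j ∈ E, A j x = b j}) ∧
      {x ∈ P | ∀ y ∈ P, f x ≤ f y} = ⋃₀ 𝓕 := by
  classical
  set M : Set (EuclideanSpace ℝ (Fin n)) := {x ∈ P | ∀ y ∈ P, f x ≤ f y} with hM
  have key : ∀ x ∈ M, ∀ y ∈ P, (∀ j, A j x = b j → A j y = b j) → y ∈ M := by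
    rintro x ⟨hxP, hxmin⟩ y hyP hE
    refine ⟨hyP, ?_⟩
    suffices h : f y ≤ f x by intro w hw; exact h.trans (hxmin w hw)
    set c : Fin m → ℝ := fun j =>
      if A j x - A j y ≤ 0 then 1 else (b j - A j x) / (A j x - A j y) with hc
    have hcpos : ∀ j, 0 < c j := by
      intro j
      simp only [hc]
      split_ifs with h
      · exact one_pos
      · push_neg at h
        have hle : A j x ≤ b j := by rw [hP] at hxP; exact hxP j
        have hxb : A j x < b j := by
          rcases hle.lt_or_eq with h' | h'
          · exact h'
          · have hy := hE j h'
            rw [h', hy] at h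
            simp at h
        exact div_pos (by linarith) (by linarith)
    set S : Finset ℝ := insert (1 : ℝ) (Finset.univ.image c) with hS
    have hSne : S.Nonempty := ⟨1, Finset.mem_insert_self _ _⟩
    set t : ℝ := S.min' hSne with htdef
    have ht1 : t ≤ 1 := Finset.min'_le _ _ (Finset.mem_insert_self _ _)
    have htc : ∀ j, t ≤ c j := fun j =>
      Finset.min'_le _ _
        (Finset.mem_insert_of_mem (Finset.mem_image_of_mem c (Finset.mem_univ j)))
    have htpos : 0 < t := by
      have hmem := S.min'_mem hSne
      rw [← htdef] at hmem
      rcases Finset.mem_insert.1 hmem with h | h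
      · rw [h]; exact one_pos
      · obtain ⟨j, _, hj⟩ := Finset.mem_image.1 h
        rw [← hj]; exact hcpos j
    set z := x + t • (x - y) with hz
    have hzP : z ∈ P := by
      rw [hP]
      intro j
      have hAz : A j z = A j x + t * (A j x - A j y) := by
        simp [hz, map_add, map_smul, map_sub, smul_eq_mul, mul_sub]
      rw [hAz]
      by_cases h : A j x - A j y ≤ 0
      · have hxb : A j x ≤ b j := by rw [hP] at hxP; exact hxP j
        nlinarith
      · push_neg at h
        have h2 := htc j
        rw [hc] at h2
        simp only [if_neg (not_le.2 h)] at h2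
        have := (le_div_iff₀ h).1 h2
        linarith
    set l := t / (1 + t) with hl
    have hst : (0 : ℝ) < 1 + t := by linarith
    have hlpos : 0 < l := div_pos htpos hst
    have hl0 : 0 ≤ l := le_of_lt hlpos
    have hl1 : l + (1 - l) = 1 := by ring
    have hl1' : 0 ≤ 1 - l := by
      rw [hl, sub_nonneg, div_le_one hst]
      linarith
    have hcomb : l • y + (1 - l) • z = x := by
      rw [hz, hl]
      match_scalars <;> field_simp <;> ring
    have hconc := hf.2 (Set.mem_univ y) (Set.mem_univ z) hl0 hl1' hl1
    rw [hcomb] at hconc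
    have hfz : f x ≤ f z := hxmin z hzP
    simp only [smul_eq_mul] at hconc
    nlinarith
  refine ⟨{F | ∃ x ∈ M, F = {y ∈ P | ∀ j ∈ {j | A j x = b j}, A j y = b j}}, ?_, ?_⟩
  · rintro F ⟨x, hx, rfl⟩
    exact ⟨{j | A j x = b j}, rfl⟩
  · ext y
    constructor
    · intro hy
      refine Set.mem_sUnion.2 ⟨_, ⟨y, hy, rfl⟩, ?_⟩
      exact ⟨hy.1, fun j hj => hj⟩
    · rintro ⟨F, ⟨x, hx, rfl⟩, hyF⟩
      exact key x hx y hyF.1 (fun j hj => hyF.2 j hj)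
end

section
/- Let (x*, η*) ∈ ℝ^d, let r_1, …, r_m ∈ ℝ^d be unit vectors generating a cone K pointed at (x*, η*) (i.e., K = { (x*,η*) + Σ_j λ_j r_j : λ_j ≥ 0 }), let S be a convex set with (x*, η*) in its interior, and for each j let α_j = sup{ α ≥ 0 : (x*,η*) + α r_j ∈ S } (with 1/α_j := 0 if α_j = ∞). Suppose a ∈ ℝ^d satisfies aᵀ r_j ≥ 1/α_j for all j, and set b = aᵀ(x*,η*) + 1. Then every point z ∈ K with aᵀ z < b lies in the interior of S. -/
private lemma seg_mem {E : Type*} [AddCommGroup E] [Module ℝ E]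
    {S : Set E} (hS : Convex ℝ S) {v : E} (hvS : v ∈ S) {r : E} {t t' : ℝ}
    (ht : 0 ≤ t) (htt' : t ≤ t') (h' : v + t' • r ∈ S) : v + t • r ∈ S := by
  rcases eq_or_lt_of_le (ht.trans htt') with h0 | hpos
  · have ht0 : t = 0 := le_antisymm (htt'.trans h0.symm.le) ht
    simpa [ht0] using hvS
  · have hs0 : 0 ≤ t / t' := div_nonneg ht hpos.le
    have hs1 : t / t' ≤ 1 := (div_le_one hpos).2 htt'
    have := hS hvS h' (by linarith : (0:ℝ) ≤ 1 - t / t') hs0 (by ring)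
    have heq : (1 - t / t') • v + (t / t') • (v + t' • r) = v + t • r := by
      rw [smul_add, smul_smul, div_mul_cancel₀ _ hpos.ne', sub_smul, one_smul]
      abel
    rwa [heq] at this

/-- the key geometric claim behind intersection cuts: every point of
the cone K pointed at v that is cut off by the intersection cut lies in the
interior of the convex set S. The condition aᵀ r_j ≥ 1/α_j (with 1/α_j := 0 for
α_j = ∞) is expressed multiplicatively, where
α_j = sup { t ≥ 0 : v + t r_j ∈ S }. -/
theorem stmt_5 {d m : ℕ} (v : EuclideanSpace ℝ (Fin d))
    (r : Fin m → EuclideanSpace ℝ (Fin d)) (hr : ∀ j, ‖r j‖ = 1)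
    (S : Set (EuclideanSpace ℝ (Fin d))) (hS : Convex ℝ S)
    (hv : v ∈ interior S)
    (K : Set (EuclideanSpace ℝ (Fin d)))
    (hK : K = {p | ∃ lam : Fin m → ℝ, (∀ j, 0 ≤ lam j) ∧ p = v + ∑ j, lam j • r j})
    (a : EuclideanSpace ℝ (Fin d))
    (ha : ∀ j,
      (BddAbove {t : ℝ | 0 ≤ t ∧ v + t • r j ∈ S} →
        1 ≤ sSup {t : ℝ | 0 ≤ t ∧ v + t • r j ∈ S} * ∑ i, a i * r j i) ∧
      (¬ BddAbove {t : ℝ | 0 ≤ t ∧ v + t • r j ∈ S} → 0 ≤ ∑ i, a i * r j i))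
    (b : ℝ) (hb : b = (∑ i, a i * v i) + 1)
    (z : EuclideanSpace ℝ (Fin d)) (hz : z ∈ K) (hzb : ∑ i, a i * z i < b) :
    z ∈ interior S := by
  classical
  rw [hK] at hz
  obtain ⟨lam, hlam0, hzeq⟩ := hz
  have hip : ∀ x y : EuclideanSpace ℝ (Fin d), ∑ i, x i * y i = (inner ℝ x y : ℝ) := by
    intro x y; simp [PiLp.inner_apply, mul_comm]
  set T : Fin m → Set ℝ := fun j => {t : ℝ | 0 ≤ t ∧ v + t • r j ∈ S} with hT
  have hvS : v ∈ S := interior_subset hv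
  obtain ⟨ε, hε, hball⟩ := Metric.isOpen_iff.1 isOpen_interior v hv
  have hTmem : ∀ j, ε / 2 ∈ T j := by
    intro j
    refine ⟨by positivity, interior_subset (hball ?_)⟩
    rw [Metric.mem_ball, dist_eq_norm]
    simp only [add_sub_cancel_left, norm_smul, hr j, mul_one, Real.norm_eq_abs]
    rw [abs_of_nonneg (by positivity)]; linarith
  have hTne : ∀ j, (T j).Nonempty := fun j => ⟨ε / 2, hTmem j⟩
  set α : Fin m → ℝ := fun j => sSup (T j) with hα
  have hαpos : ∀ j, BddAbove (T j) → 0 < α j := fun j hbdd =>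
    lt_of_lt_of_le (by positivity) (le_csSup hbdd (hTmem j))
  have hclosS : ∀ j, BddAbove (T j) → v + α j • r j ∈ closure S := by
    intro j hbdd
    have h1 : α j ∈ closure (T j) := csSup_mem_closure (hTne j) hbdd
    have hc : Continuous fun t : ℝ => v + t • r j :=
      continuous_const.add (continuous_id.smul continuous_const)
    exact map_mem_closure (f := fun t : ℝ => v + t • r j) hc h1 (fun t ht => ht.2)
  have hunb : ∀ j, ¬ BddAbove (T j) → ∀ t : ℝ, 0 ≤ t → v + t • r j ∈ S := by
    intro j hbdd t ht
    obtain ⟨t', ht'T, htt'⟩ := not_bddAbove_iff.1 hbdd t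
    exact seg_mem hS hvS ht htt'.le ht'T.2
  set A : Fin m → ℝ := fun j => ∑ i, a i * r j i with hA
  have hAinner : ∀ j, A j = (inner ℝ a (r j) : ℝ) := fun j => hip a (r j)
  -- budget inequality
  have hc1 : ∑ j, lam j * A j < 1 := by
    have hz' : ∑ i, a i * z i = (∑ i, a i * v i) + ∑ j, lam j * A j := by
      rw [hip a z, hip a v, hzeq, inner_add_right, inner_sum]
      congr 1
      refine Finset.sum_congr rfl fun j _ => ?_
      rw [real_inner_smul_right, hAinner]
    rw [hz', hb] at hzb
    linarith
  set c := ∑ j, lam j * A j with hcdef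
  -- individual bounds
  have hkey : ∀ j, BddAbove (T j) → lam j / α j ≤ lam j * A j := by
    intro j hbdd
    have h1 : 1 ≤ α j * A j := (ha j).1 hbdd
    have hαj := hαpos j hbdd
    have hAj : 1 / α j ≤ A j := (div_le_iff₀' hαj).2 h1
    calc lam j / α j = lam j * (1 / α j) := by ring
      _ ≤ lam j * A j := mul_le_mul_of_nonneg_left hAj (hlam0 j)
  have hA0 : ∀ j, ¬ BddAbove (T j) → 0 ≤ A j := fun j hbdd => (ha j).2 hbdd
  set δ : ℝ := (1 - c) / (2 * (m + 1)) with hδdef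
  have hδpos : 0 < δ := by
    have : 0 < 1 - c := by linarith
    positivity
  set μ : Fin m → ℝ := fun j => if BddAbove (T j) then lam j / α j else δ with hμdef
  have hμ0 : ∀ j, 0 ≤ μ j := by
    intro j
    by_cases hbdd : BddAbove (T j)
    · simp only [hμdef, if_pos hbdd]
      exact div_nonneg (hlam0 j) (hαpos j hbdd).le
    · simp only [hμdef, if_neg hbdd]; exact hδpos.le
  have hμle : ∀ j, μ j ≤ lam j * A j + δ := by
    intro j
    by_cases hbdd : BddAbove (T j)
    · simp only [hμdef, if_pos hbdd]
      have := hkey j hbdd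
      linarith
    · simp only [hμdef, if_neg hbdd]
      have : 0 ≤ lam j * A j := mul_nonneg (hlam0 j) (hA0 j hbdd)
      linarith
  set s := ∑ j, μ j with hsdef
  have hslt : s < 1 := by
    have h1 : s ≤ c + (m : ℝ) * δ := by
      calc s ≤ ∑ j, (lam j * A j + δ) := Finset.sum_le_sum fun j _ => hμle j
        _ = c + (m : ℝ) * δ := by
            rw [Finset.sum_add_distrib, Finset.sum_const, Finset.card_fin]
            simp [hcdef, nsmul_eq_mul]
    have hm0 : (0:ℝ) ≤ m := Nat.cast_nonneg m
    have hδeq : δ * (2 * ((m : ℝ) + 1)) = 1 - c := by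
      rw [hδdef]; field_simp
    have h2 : (m : ℝ) * δ ≤ (1 - c) / 2 := by nlinarith [hδpos.le, hm0, hδeq]
    linarith
  have hs0 : 0 ≤ s := Finset.sum_nonneg fun j _ => hμ0 j
  -- the points on the boundary / in the set
  have hμlam : ∀ j, μ j * (lam j / μ j) = lam j := by
    intro j
    by_cases hbdd : BddAbove (T j)
    · by_cases hl0 : lam j = 0
      · simp [hl0]
      · have hμne : μ j ≠ 0 := by
          simp only [hμdef, if_pos hbdd]
          exact div_ne_zero hl0 (hαpos j hbdd).ne'
        rw [mul_comm, div_mul_cancel₀ _ hμne]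
    · have hμne : μ j ≠ 0 := by simp only [hμdef, if_neg hbdd]; exact hδpos.ne'
      rw [mul_comm, div_mul_cancel₀ _ hμne]
  have hpmem : ∀ j, v + (lam j / μ j) • r j ∈ closure S := by
    intro j
    by_cases hbdd : BddAbove (T j)
    · by_cases hl0 : lam j = 0
      · simpa [hl0] using subset_closure hvS
      · have : lam j / μ j = α j := by
          simp only [hμdef, if_pos hbdd]
          rw [div_div_eq_mul_div, mul_comm, mul_div_assoc, div_self hl0, mul_one]
        rw [this]
        exact hclosS j hbdd
    · have hμj : μ j = δ := by simp only [hμdef, if_neg hbdd]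
      refine subset_closure (hunb j hbdd _ ?_)
      rw [hμj]
      exact div_nonneg (hlam0 j) hδpos.le
  -- key decomposition
  have hzkey : z = (1 - s) • v + ∑ j, μ j • (v + (lam j / μ j) • r j) := by
    have : ∑ j, μ j • (v + (lam j / μ j) • r j)
        = s • v + ∑ j, lam j • r j := by
      rw [hsdef, Finset.sum_smul]
      rw [← Finset.sum_add_distrib]
      refine Finset.sum_congr rfl fun j _ => ?_
      rw [smul_add, smul_smul, hμlam j]
    rw [this, hzeq, sub_smul, one_smul]
    abel
  rcases hs0.eq_or_lt with hseq | hspos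
  · -- s = 0 : all μ j = 0, hence all lam j = 0 and z = v
    have hall : ∀ j ∈ Finset.univ, μ j = 0 :=
      (Finset.sum_eq_zero_iff_of_nonneg fun j _ => hμ0 j).1 hseq.symm
    have hlamall : ∀ j, lam j = 0 := by
      intro j
      have hμj := hall j (Finset.mem_univ j)
      by_cases hbdd : BddAbove (T j)
      · simp only [hμdef, if_pos hbdd] at hμj
        rcases div_eq_zero_iff.1 hμj with h | h
        · exact h
        · exact absurd h (hαpos j hbdd).ne'
      · simp only [hμdef, if_neg hbdd] at hμj
        exact absurd hμj hδpos.ne'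
    have : z = v := by
      rw [hzeq]
      simp [hlamall]
    rwa [this]
  · -- s > 0 : convex combination argument
    set w := ∑ j, (μ j / s) • (v + (lam j / μ j) • r j) with hwdef
    have hwmem : w ∈ closure S := by
      refine Convex.sum_mem hS.closure (fun j _ => div_nonneg (hμ0 j) hs0)
        ?_ (fun j _ => hpmem j)
      rw [← Finset.sum_div, ← hsdef, div_self hspos.ne']
    have hzw : z = (1 - s) • v + s • w := by
      rw [hzkey, hwdef, Finset.smul_sum]
      congr 1
      refine Finset.sum_congr rfl fun j _ => ?_
      rw [smul_smul, mul_div_cancel₀ _ hspos.ne']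
    rw [hzw]
    exact hS.combo_interior_closure_mem_interior hv hwmem (by linarith) hs0 (by ring)
end

section
/- Under the hypotheses of the intersection-cut construction (cone K pointed at (x*,η*) with unit extreme rays r_j, convex set S with (x*,η*) ∈ int S, step lengths α_j, vector a with aᵀ r_j ≥ 1/α_j, and b = aᵀ(x*,η*) + 1): the point (x*,η*) strictly violates the inequality aᵀ z ≥ b (indeed b − aᵀ(x*,η*) = 1 > 0), and every point of K that lies outside the interior of S satisfies aᵀ z ≥ b. -/
/-- the intersection cut aᵀz ≥ b strictly cuts off the vertex v
(indeed b − aᵀv = 1 > 0) and is satisfied by every point of the cone K lying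
outside the interior of the NE-free set S. -/
theorem stmt_6 {d m : ℕ} (v : EuclideanSpace ℝ (Fin d))
    (r : Fin m → EuclideanSpace ℝ (Fin d)) (hr : ∀ j, ‖r j‖ = 1)
    (S : Set (EuclideanSpace ℝ (Fin d))) (hS : Convex ℝ S)
    (hv : v ∈ interior S)
    (K : Set (EuclideanSpace ℝ (Fin d)))
    (hK : K = {p | ∃ lam : Fin m → ℝ, (∀ j, 0 ≤ lam j) ∧ p = v + ∑ j, lam j • r j})
    (a : EuclideanSpace ℝ (Fin d))
    (ha : ∀ j,
      (BddAbove {t : ℝ | 0 ≤ t ∧ v + t • r j ∈ S} →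
        1 ≤ sSup {t : ℝ | 0 ≤ t ∧ v + t • r j ∈ S} * ∑ i, a i * r j i) ∧
      (¬ BddAbove {t : ℝ | 0 ≤ t ∧ v + t • r j ∈ S} → 0 ≤ ∑ i, a i * r j i))
    (b : ℝ) (hb : b = (∑ i, a i * v i) + 1) :
    (b - ∑ i, a i * v i = 1) ∧
    (∀ z ∈ K, z ∉ interior S → b ≤ ∑ i, a i * z i) := by
  classical
  have hvS : v ∈ S := interior_subset hv
  refine ⟨by rw [hb]; ring, ?_⟩
  intro z hz hzi
  rw [hK] at hz
  obtain ⟨lam, hlam, rfl⟩ := hz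
  -- coordinate computation
  have hz_sum : (∑ i, a i * (v + ∑ j, lam j • r j) i)
      = (∑ i, a i * v i) + ∑ j, lam j * ∑ i, a i * r j i := by
    have h1 : ∀ i : Fin d, (v + ∑ j, lam j • r j) i = v i + ∑ j, lam j * r j i := by
      intro i
      rw [show ((v + ∑ j, lam j • r j) i)
          = v i + (∑ j, lam j • r j : Fin d → ℝ) i from by simp, Finset.sum_apply]
      rfl
    simp only [h1, mul_add, Finset.sum_add_distrib, Finset.mul_sum]
    rw [Finset.sum_comm]
    congr 1
    exact Finset.sum_congr rfl (fun j _ =>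
      Finset.sum_congr rfl (fun i _ => by ring))
  rw [hb, hz_sum]
  have key : 1 ≤ ∑ j, lam j * ∑ i, a i * r j i := by
    by_contra hlt
    push_neg at hlt
    apply hzi
    set T : Fin m → Set ℝ := fun j => {t : ℝ | 0 ≤ t ∧ v + t • r j ∈ S} with hT
    have hT0 : ∀ j, (0:ℝ) ∈ T j := fun j => ⟨le_refl 0, by simpa using hvS⟩
    have hTne : ∀ j, (T j).Nonempty := fun j => ⟨0, hT0 j⟩
    -- membership up to an element
    have hmem : ∀ j t, 0 ≤ t → (∃ t' ∈ T j, t ≤ t') → v + t • r j ∈ S := by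
      intro j t ht ⟨t', ht', htt'⟩
      rcases eq_or_lt_of_le (ht.trans htt' : (0:ℝ) ≤ t') with h0 | h0
      · have : t = 0 := le_antisymm (htt'.trans h0.symm.le) ht
        simpa [this] using hvS
      · have hcomb := hS hvS ht'.2 (a := 1 - t / t') (b := t / t')
          (by have : t / t' ≤ 1 := div_le_one_of_le₀ htt' h0.le; linarith)
          (div_nonneg ht h0.le) (by ring)
        have heq : (1 - t / t') • v + (t / t') • (v + t' • r j) = v + t • r j := by
          have h2 : (t / t') * t' = t := div_mul_cancel₀ t h0.ne'
          rw [smul_add, smul_smul, h2]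
          module
        rwa [heq] at hcomb
    -- positivity of sSup in the bounded case
    obtain ⟨ε, hε, hball⟩ := Metric.mem_nhds_iff.mp (mem_interior_iff_mem_nhds.mp hv)
    have hhalf : ∀ j, ε / 2 ∈ T j := by
      intro j
      refine ⟨by positivity, hball ?_⟩
      have hd : dist (v + (ε / 2) • r j) v = ε / 2 := by
        rw [dist_eq_norm, add_sub_cancel_left, norm_smul, hr j, mul_one,
          Real.norm_eq_abs, abs_of_pos (by positivity)]
      rw [Metric.mem_ball, hd]; linarith
    have hsSup_pos : ∀ j, BddAbove (T j) → 0 < sSup (T j) := by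
      intro j hbdd
      have := le_csSup hbdd (hhalf j)
      linarith
    -- the normalized coefficients
    set c : Fin m → ℝ := fun j =>
      if BddAbove (T j) then lam j / sSup (T j) else 0 with hc
    have hc0 : ∀ j, 0 ≤ c j := by
      intro j
      rw [hc]
      dsimp only
      split_ifs with h
      · exact div_nonneg (hlam j) (hsSup_pos j h).le
      · exact le_refl 0
    have hcle : ∀ j, c j ≤ lam j * ∑ i, a i * r j i := by
      intro j
      rw [hc]
      dsimp only
      split_ifs with h
      · have h1 : 1 ≤ sSup (T j) * ∑ i, a i * r j i := (ha j).1 h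
        have hpos := hsSup_pos j h
        rw [div_le_iff₀ hpos]
        nlinarith [mul_le_mul_of_nonneg_left h1 (hlam j)]
      · exact mul_nonneg (hlam j) ((ha j).2 h)
    have hcsum : ∑ j, c j < 1 :=
      lt_of_le_of_lt (Finset.sum_le_sum (fun j _ => hcle j)) hlt
    -- degenerate case m = 0
    rcases Nat.eq_zero_or_pos m with hm | hm
    · subst hm
      simpa using hv
    -- choose weights
    set δ : ℝ := (1 - ∑ j, c j) / (2 * m) with hδdef
    have hδ : 0 < δ := by
      apply div_pos (by linarith)
      positivity
    set μ : Fin m → ℝ := fun j => c j + δ with hμ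
    have hμpos : ∀ j, 0 < μ j := fun j => by
      have := hc0 j; rw [hμ]; dsimp only; linarith
    have hμsum : ∑ j, μ j < 1 := by
      have hconst : ∑ _j : Fin m, δ = (m : ℝ) * δ := by
        simp [Finset.sum_const, Finset.card_univ, nsmul_eq_mul]
      have h2 : ∑ j, μ j = (∑ j, c j) + (m : ℝ) * δ := by
        simp only [hμ]
        rw [Finset.sum_add_distrib, hconst]
      have h3 : (m : ℝ) * δ = (1 - ∑ j, c j) / 2 := by
        rw [hδdef]
        have hm' : (m : ℝ) ≠ 0 := Nat.cast_ne_zero.mpr hm.ne'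
        field_simp
      rw [h2, h3]
      linarith
    -- the points p j
    set p : Fin m → EuclideanSpace ℝ (Fin d) :=
      fun j => v + (lam j / μ j) • r j with hp
    have hpS : ∀ j, p j ∈ S := by
      intro j
      apply hmem j _ (div_nonneg (hlam j) (hμpos j).le)
      by_cases hbdd : BddAbove (T j)
      · have hs := hsSup_pos j hbdd
        have hcj : c j = lam j / sSup (T j) := by rw [hc]; simp [hbdd]
        have hlt' : lam j / μ j < sSup (T j) := by
          rw [div_lt_iff₀ (hμpos j)]
          have h4 : lam j / sSup (T j) < μ j := by
            rw [hμ]; dsimp only; rw [← hcj]; linarith [hδ]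
          calc lam j = (lam j / sSup (T j)) * sSup (T j) := by
                field_simp
            _ < sSup (T j) * μ j := by
                rw [mul_comm (sSup (T j)) (μ j)]
                exact mul_lt_mul_of_pos_right h4 hs
        obtain ⟨t', ht', h⟩ := exists_lt_of_lt_csSup (hTne j) hlt'
        exact ⟨t', ht', h.le⟩
      · obtain ⟨t', ht', h⟩ := not_bddAbove_iff.mp hbdd (lam j / μ j)
        exact ⟨t', ht', h.le⟩
    have hrepr : ∀ j, μ j • (p j - v) = lam j • r j := by
      intro j
      rw [hp]
      dsimp only
      rw [add_sub_cancel_left, smul_smul, mul_div_cancel₀ _ (hμpos j).ne']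
    -- total weight
    set cs : ℝ := ∑ j, μ j with hcs
    have hcspos : 0 < cs := by
      rw [hcs]
      exact Finset.sum_pos (fun j _ => hμpos j) ⟨⟨0, hm⟩, Finset.mem_univ _⟩
    have hcslt : cs < 1 := hμsum
    set w : EuclideanSpace ℝ (Fin d) := cs⁻¹ • ∑ j, μ j • p j with hw
    have hwS : w ∈ S := by
      rw [hw, Finset.smul_sum]
      have h5 : ∀ j, cs⁻¹ • μ j • p j = (μ j / cs) • p j := by
        intro j; rw [smul_smul, div_eq_inv_mul]
      simp_rw [h5]
      apply hS.sum_mem (fun j _ => div_nonneg (hμpos j).le hcspos.le)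
      · rw [← Finset.sum_div, ← hcs, div_self hcspos.ne']
      · exact fun j _ => hpS j
    have hzeq : v + ∑ j, lam j • r j = (1 - cs) • v + cs • w := by
      rw [hw, smul_smul, mul_inv_cancel₀ hcspos.ne', one_smul]
      have h6 : ∑ j, lam j • r j = ∑ j, μ j • (p j - v) :=
        Finset.sum_congr rfl (fun j _ => (hrepr j).symm)
      rw [h6]
      simp only [smul_sub, Finset.sum_sub_distrib, ← Finset.sum_smul, ← hcs]
      module
    rw [hzeq]
    exact hS.combo_interior_self_mem_interior hv hwS (by linarith) hcspos.le
      (by ring)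
  linarith
end

section
/- Suppose for a fixed player i and fixed strategy y*_i that g_i(y*_i, x̄_{−i}) is an integer vector for every Nash equilibrium x̄. Define the enlarged set S^1_i = { (x,η) : η_i ≥ π_i(y*_i, x_{−i}), g_i(y*_i, x_{−i}) ≤ 1 } (componentwise ≤ 1). Then the interior of S^1_i contains no point (x̄, π(x̄)) with x̄ a Nash equilibrium. -/
/-- if g_i(y*_i, x̄₋ᵢ) is integral at every Nash equilibrium x̄,
then the interior of the enlarged set
S¹ᵢ = {(x,η) : ηᵢ ≥ πᵢ(y*ᵢ,x₋ᵢ), gᵢ(y*ᵢ,x₋ᵢ) ≤ 1} contains no equilibrium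
point (x̄, π(x̄)). (Interior points satisfy the strict inequalities, as in the
paper's setting.) -/
theorem stmt_9 {N : Type*} [Fintype N] [DecidableEq N] (d : N → ℕ) (m : N → ℕ)
    (π : N → (∀ j, EuclideanSpace ℝ (Fin (d j))) → ℝ)
    (g : ∀ i, (∀ j, EuclideanSpace ℝ (Fin (d j))) → Fin (m i) → ℝ)
    (i : N) (ys : ∀ j, EuclideanSpace ℝ (Fin (d j)))
    (S1 : Set ((∀ j, EuclideanSpace ℝ (Fin (d j))) × (N → ℝ)))
    (hS1 : S1 = {p | π i (Function.update p.1 i (ys i)) ≤ p.2 i ∧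
      ∀ k, g i (Function.update p.1 i (ys i)) k ≤ 1})
    (hstrict : ∀ p ∈ interior S1,
      π i (Function.update p.1 i (ys i)) < p.2 i ∧
      ∀ k, g i (Function.update p.1 i (ys i)) k < 1)
    (hint : ∀ xb : ∀ j, EuclideanSpace ℝ (Fin (d j)),
      ((∀ j k, g j xb k ≤ 0) ∧
        ∀ j yj, (∀ k, g j (Function.update xb j yj) k ≤ 0) →
          π j xb ≤ π j (Function.update xb j yj)) →
      ∀ k, ∃ z : ℤ, g i (Function.update xb i (ys i)) k = (z : ℝ)) :
    ∀ xb : ∀ j, EuclideanSpace ℝ (Fin (d j)),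
      ((∀ j k, g j xb k ≤ 0) ∧
        ∀ j yj, (∀ k, g j (Function.update xb j yj) k ≤ 0) →
          π j xb ≤ π j (Function.update xb j yj)) →
      (xb, fun j => π j xb) ∉ interior S1 := by
  intro xb heq hmem
  obtain ⟨hlt, hg⟩ := hstrict _ hmem
  have hg0 : ∀ k, g i (Function.update xb i (ys i)) k ≤ 0 := by
    intro k
    obtain ⟨z, hz⟩ := hint xb heq k
    have := hg k
    rw [hz] at this ⊢
    exact_mod_cast Int.lt_add_one_iff.mp (by exact_mod_cast this)
  have := heq.2 i (ys i) hg0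
  simp only at hlt
  linarith
end

section
/- In a standard NEP where x_{−i} ↦ π_i(y*_i, x_{−i}) is linear, say π_i(y*_i, x_{−i}) = cᵀ x_{−i}, let (x*, η*) satisfy η*_i > cᵀ x*_{−i}, let r_1, …, r_m be unit extreme rays of a cone pointed at (x*, η*), and suppose each α_j = sup{α ≥ 0 : η*_i + α r_j^{η,i} ≥ cᵀ(x*_{−i} + α r_j^{x_{−i}})} is finite and positive. Define a by aᵀ(x,η) = (η_i − cᵀ x_{−i}) / (cᵀ x*_{−i} − η*_i). Then aᵀ r_j = 1/α_j for all j, and the intersection cut aᵀ(x,η) ≥ aᵀ(x*,η*) + 1 is equivalent to the equilibrium cut η_i ≤ cᵀ x_{−i}. -/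
/-- in a standard NEP with linear cost x₋ᵢ ↦ cᵀx₋ᵢ for the fixed
best response y*ᵢ, with finite positive step lengths α_j along the unit rays,
the vector a given by aᵀ(x,η) = (ηᵢ − cᵀx) / (cᵀx* − η*ᵢ) satisfies
aᵀ r_j = 1/α_j, and the intersection cut aᵀ(x,η) ≥ aᵀ(x*,η*) + 1 is equivalent
to the equilibrium cut ηᵢ ≤ cᵀx. -/
theorem stmt_11 {dx m : ℕ} {N : Type*} [Fintype N] (i : N)
    (c : Fin dx → ℝ) (xs : Fin dx → ℝ) (ηs : N → ℝ)
    (hv : ∑ l, c l * xs l < ηs i)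
    (r : Fin m → (Fin dx → ℝ) × (N → ℝ)) (hr : ∀ j, ‖r j‖ = 1)
    (α : Fin m → ℝ) (hαpos : ∀ j, 0 < α j)
    (hα : ∀ j, IsLUB {t : ℝ | 0 ≤ t ∧
      ∑ l, c l * (xs l + t * (r j).1 l) ≤ ηs i + t * (r j).2 i} (α j))
    (a : (Fin dx → ℝ) × (N → ℝ) → ℝ)
    (ha : ∀ pz, a pz = (pz.2 i - ∑ l, c l * pz.1 l) / (∑ l, c l * xs l - ηs i)) :
    (∀ j, a (r j) = 1 / α j) ∧
    (∀ pz : (Fin dx → ℝ) × (N → ℝ),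
      (a (xs, ηs) + 1 ≤ a pz) ↔ pz.2 i ≤ ∑ l, c l * pz.1 l) := by
  set S : ℝ := ∑ l, c l * xs l with hS
  have hg : 0 < ηs i - S := by linarith
  constructor
  · intro j
    set Cj : ℝ := ∑ l, c l * (r j).1 l with hCj
    set Rj : ℝ := (r j).2 i with hRj
    have hset : {t : ℝ | 0 ≤ t ∧
        ∑ l, c l * (xs l + t * (r j).1 l) ≤ ηs i + t * (r j).2 i}
        = {t : ℝ | 0 ≤ t ∧ t * (Cj - Rj) ≤ ηs i - S} := by
      ext t
      have hsum : ∑ l, c l * (xs l + t * (r j).1 l) = S + t * Cj := by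
        rw [hS, hCj, Finset.mul_sum]
        rw [← Finset.sum_add_distrib]
        apply Finset.sum_congr rfl
        intro l _
        ring
      simp only [Set.mem_setOf_eq, hsum]
      constructor
      · rintro ⟨h1, h2⟩; exact ⟨h1, by linarith⟩
      · rintro ⟨h1, h2⟩; exact ⟨h1, by linarith⟩
    have hαj := hα j
    rw [hset] at hαj
    have hd : 0 < Cj - Rj := by
      by_contra hd
      push_neg at hd
      have hmem : α j + 1 ∈ {t : ℝ | 0 ≤ t ∧ t * (Cj - Rj) ≤ ηs i - S} := by
        refine ⟨by linarith [hαpos j], ?_⟩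
        have : (α j + 1) * (Cj - Rj) ≤ 0 := by
          apply mul_nonpos_of_nonneg_of_nonpos <;> linarith [hαpos j]
        linarith
      have := hαj.1 hmem
      linarith
    have hIcc : {t : ℝ | 0 ≤ t ∧ t * (Cj - Rj) ≤ ηs i - S}
        = Set.Icc 0 ((ηs i - S) / (Cj - Rj)) := by
      ext t
      simp only [Set.mem_setOf_eq, Set.mem_Icc]
      constructor
      · rintro ⟨h1, h2⟩; exact ⟨h1, (le_div_iff₀ hd).mpr h2⟩
      · rintro ⟨h1, h2⟩; exact ⟨h1, (le_div_iff₀ hd).mp h2⟩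
    rw [hIcc] at hαj
    have hle : (0:ℝ) ≤ (ηs i - S) / (Cj - Rj) := by positivity
    have huniq : α j = (ηs i - S) / (Cj - Rj) := hαj.unique (isLUB_Icc hle)
    rw [ha, huniq, ← hCj, ← hRj]
    rw [div_div_eq_mul_div, one_mul]
    rw [div_eq_div_iff (by linarith) (by linarith)]
    ring
  · intro pz
    have hxs : a (xs, ηs) = -1 := by
      rw [ha]
      rw [div_eq_iff (by linarith : S - ηs i ≠ 0)]
      ring
    rw [hxs, ha]
    have hneg : S - ηs i < 0 := by linarith
    constructor
    · intro h
      have h0 : (0:ℝ) ≤ (pz.2 i - ∑ l, c l * pz.1 l) / (S - ηs i) := by linarith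
      rcases div_nonneg_iff.mp h0 with ⟨h1, h2⟩ | ⟨h1, h2⟩
      · linarith
      · linarith
    · intro h
      have : (0:ℝ) ≤ (pz.2 i - ∑ l, c l * pz.1 l) / (S - ηs i) :=
        div_nonneg_iff.mpr (Or.inr ⟨ (by linarith), le_of_lt hneg⟩)
      linarith
end

section
/- Consider a two-node network with nodes s, t and two parallel edges e1, e2, one flow player with demand 2, capacities c = (3,3), utility μ = (2,1), target load u = (1,1), and a pricing authority choosing p ∈ [0, p_max]^2. The flow player's cost is (p − μ)ᵀ x and the authority's cost is (u − x)ᵀ p. Then for any M > 2, the cyclic sequence of profiles (x,p): ((2,0),(0,0)) → ((2,0),(M,0)) → ((0,2),(M,0)) → ((0,2),(0,0)) → ((2,0),(0,0)), in which at each step exactly one of the two agents changes strategy, is an improvement cycle: the deviating agent strictly decreases her own cost at every step. Hence this game admits no generalized ordinal potential function. -/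
/-- the two-node two-edge pricing game with one flow player
(strategies (2,0), (0,2)), utility μ = (2,1), target load u = (1,1) admits, for
every M > 2, a strict improvement cycle; hence no generalized ordinal
potential exists. -/
theorem stmt_14
    (π₁ : (ℝ × ℝ) → (ℝ × ℝ) → ℝ) (π₂ : (ℝ × ℝ) → (ℝ × ℝ) → ℝ)
    (hπ₁ : ∀ x p, π₁ x p = (p.1 - 2) * x.1 + (p.2 - 1) * x.2)
    (hπ₂ : ∀ p x, π₂ p x = (1 - x.1) * p.1 + (1 - x.2) * p.2) :
    (∀ M : ℝ, M > 2 →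
      π₂ (M, 0) (2, 0) < π₂ (0, 0) (2, 0) ∧
      π₁ (0, 2) (M, 0) < π₁ (2, 0) (M, 0) ∧
      π₂ (0, 0) (0, 2) < π₂ (M, 0) (0, 2) ∧
      π₁ (2, 0) (0, 0) < π₁ (0, 2) (0, 0)) ∧
    ¬ ∃ Φ : (ℝ × ℝ) → (ℝ × ℝ) → ℝ,
      (∀ x x' p : ℝ × ℝ, (x = (2, 0) ∨ x = (0, 2)) → (x' = (2, 0) ∨ x' = (0, 2)) →
        0 ≤ p.1 → 0 ≤ p.2 → π₁ x' p < π₁ x p → Φ x' p < Φ x p) ∧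
      (∀ x p p' : ℝ × ℝ, (x = (2, 0) ∨ x = (0, 2)) → 0 ≤ p.1 → 0 ≤ p.2 →
        0 ≤ p'.1 → 0 ≤ p'.2 → π₂ p' x < π₂ p x → Φ x p' < Φ x p) := by
  have cyc : ∀ M : ℝ, M > 2 →
      π₂ (M, 0) (2, 0) < π₂ (0, 0) (2, 0) ∧
      π₁ (0, 2) (M, 0) < π₁ (2, 0) (M, 0) ∧
      π₂ (0, 0) (0, 2) < π₂ (M, 0) (0, 2) ∧
      π₁ (2, 0) (0, 0) < π₁ (0, 2) (0, 0) := by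
    intro M hM
    simp only [hπ₁, hπ₂]
    norm_num
    refine ⟨by nlinarith, by nlinarith, by linarith⟩
  refine ⟨cyc, ?_⟩
  rintro ⟨Φ, h1, h2⟩
  obtain ⟨c1, c2, c3, c4⟩ := cyc 3 (by norm_num)
  have s1 := h2 (2, 0) (0, 0) (3, 0) (Or.inl rfl) le_rfl le_rfl (by norm_num) le_rfl c1
  have s2 := h1 (2, 0) (0, 2) (3, 0) (Or.inl rfl) (Or.inr rfl) (by norm_num) le_rfl c2
  have s3 := h2 (0, 2) (3, 0) (0, 0) (Or.inr rfl) (by norm_num) le_rfl le_rfl le_rfl c3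
  have s4 := h1 (0, 2) (2, 0) (0, 0) (Or.inr rfl) (Or.inl rfl) le_rfl le_rfl c4
  linarith
end

section
/- In the pricing/implementation game, a tuple (x*, p*) weakly implements the target load u if and only if (x*, p*) is a generalized Nash equilibrium of the associated (n+1)-player GNEP in which players i ∈ N have cost π_i(x,p) = (p − μ_i)ᵀ x_i over strategies X_i(x_{−i}) = X'_i ∩ { x_i ∈ ℤ^E_{≥0} : x_i ≤ c − Σ_{j≠i} x_j }, and the authority has cost π_{n+1}(p,x) = (u − ℓ(x))ᵀ p over prices 0 ≤ p ≤ p_max. -/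
/-- in the pricing/implementation game, (x*, p*) weakly
implements the target load u if and only if (x*, p*) is an equilibrium of the
associated (n+1)-player GNEP (players minimize (p−μᵢ)ᵀxᵢ over capacity-coupled
integral flows, the authority minimizes (u−ℓ(x))ᵀp over the price box). -/
theorem stmt_15 {V E : Type*} [Fintype V] [Fintype E] [DecidableEq E]
    (n : ℕ) (A : Matrix V E ℤ) (bvec : Fin n → V → ℤ)
    (μ : Fin n → E → ℝ) (hμ : ∀ i e, 0 ≤ μ i e)
    (c : E → ℤ) (hc : ∀ e, 0 ≤ c e)
    (u : E → ℝ) (hu : ∀ e, 0 ≤ u e)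
    (pmax : E → ℝ)
    (hpmax : ∀ i e,
      (Fintype.card E : ℝ) * (⨆ e', μ i e') * (⨆ e', (c e' : ℝ)) < pmax e)
    (Xp : Fin n → Set (E → ℤ))
    (hXp : ∀ i, Xp i = {z | (∀ e, 0 ≤ z e) ∧ A.mulVec z = bvec i} ∪ {0})
    (xs : Fin n → E → ℤ) (ps : E → ℝ) :
    -- weak implementation of u by (xs, ps):
    ( (∀ e, ((∑ i, xs i e : ℤ) : ℝ) ≤ u e) ∧
      (∀ i, (xs i ∈ Xp i ∧
          ∀ e, xs i e ≤ c e - ∑ j ∈ Finset.univ.erase i, xs j e) ∧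
        ∀ z, (z ∈ Xp i ∧
            ∀ e, z e ≤ c e - ∑ j ∈ Finset.univ.erase i, xs j e) →
          ∑ e, (μ i e - ps e) * (z e : ℝ) ≤ ∑ e, (μ i e - ps e) * (xs i e : ℝ)) ∧
      (∀ e, ((∑ i, xs i e : ℤ) : ℝ) < u e → ps e = 0) ∧
      (∀ e, 0 ≤ ps e ∧ ps e ≤ pmax e) )
    ↔
    -- (xs, ps) is a generalized Nash equilibrium:
    ( (∀ i, xs i ∈ Xp i ∧
        ∀ e, xs i e ≤ c e - ∑ j ∈ Finset.univ.erase i, xs j e) ∧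
      (∀ e, 0 ≤ ps e ∧ ps e ≤ pmax e) ∧
      (∀ i, ∀ z, (z ∈ Xp i ∧
          ∀ e, z e ≤ c e - ∑ j ∈ Finset.univ.erase i, xs j e) →
        ∑ e, (ps e - μ i e) * (xs i e : ℝ) ≤ ∑ e, (ps e - μ i e) * (z e : ℝ)) ∧
      (∀ q : E → ℝ, (∀ e, 0 ≤ q e ∧ q e ≤ pmax e) →
        ∑ e, (u e - ((∑ i, xs i e : ℤ) : ℝ)) * ps e ≤
          ∑ e, (u e - ((∑ i, xs i e : ℤ) : ℝ)) * q e) ) := by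
  have hflip : ∀ (i : Fin n) (w : E → ℤ),
      ∑ e, (ps e - μ i e) * (w e : ℝ) = -∑ e, (μ i e - ps e) * (w e : ℝ) := by
    intro i w
    rw [← Finset.sum_neg_distrib]
    exact Finset.sum_congr rfl fun e _ => by ring
  constructor
  · rintro ⟨hload, hplayers, hcs, hbox⟩
    refine ⟨fun i => (hplayers i).1, hbox, ?_, ?_⟩
    · intro i z hz
      have h := (hplayers i).2 z hz
      rw [hflip i z, hflip i (xs i)]
      linarith
    · intro q hq
      have hL : ∑ e, (u e - ((∑ i, xs i e : ℤ) : ℝ)) * ps e = 0 := by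
        refine Finset.sum_eq_zero fun e _ => ?_
        rcases lt_or_eq_of_le (hload e) with h | h
        · rw [hcs e h, mul_zero]
        · rw [← h, sub_self, zero_mul]
      rw [hL]
      exact Finset.sum_nonneg fun e _ =>
        mul_nonneg (sub_nonneg.2 (hload e)) (hq e).1
  · rintro ⟨hfeas, hbox, hplayers, hauth⟩
    -- nonnegativity of flows
    have hxnn : ∀ i e, 0 ≤ xs i e := by
      intro i e
      have hm := (hfeas i).1
      rw [hXp i] at hm
      rcases hm with h | h
      · exact h.1 e
      · simp only [Set.mem_singleton_iff] at h
        rw [h]; simp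
    have hxc : ∀ (i : Fin n) e, xs i e ≤ c e := by
      intro i e
      have h := (hfeas i).2 e
      have hsum : (0:ℤ) ≤ ∑ j ∈ Finset.univ.erase i, xs j e :=
        Finset.sum_nonneg fun j _ => hxnn j e
      omega
    have hz0 : ∀ i : Fin n, (0 : E → ℤ) ∈ Xp i ∧
        ∀ e, (0 : E → ℤ) e ≤ c e - ∑ j ∈ Finset.univ.erase i, xs j e := by
      intro i
      constructor
      · rw [hXp i]; exact Or.inr rfl
      · intro e
        have h := (hfeas i).2 e
        have := hxnn i e
        simp only [Pi.zero_apply]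
        omega
    -- key: load does not exceed u
    have hload : ∀ e, ((∑ i, xs i e : ℤ) : ℝ) ≤ u e := by
      intro e0
      by_contra hlt
      push_neg at hlt
      -- step 1 : ps e0 ≥ pmax e0
      have hps0 : pmax e0 ≤ ps e0 := by
        have hq : ∀ e, 0 ≤ Function.update ps e0 (pmax e0) e ∧
            Function.update ps e0 (pmax e0) e ≤ pmax e := by
          intro e
          by_cases he : e = e0
          · subst he
            simp only [Function.update_self]
            exact ⟨le_trans (hbox e).1 (hbox e).2, le_refl _⟩
          · rw [Function.update_of_ne he]
            exact hbox e
        have h := hauth _ hq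
        set F : E → ℝ := fun e => u e - ((∑ i, xs i e : ℤ) : ℝ) with hF
        have hsplit : ∀ g : E → ℝ, ∑ e, F e * g e
            = F e0 * g e0 + ∑ e ∈ Finset.univ.erase e0, F e * g e := by
          intro g
          exact (Finset.add_sum_erase _ _ (Finset.mem_univ e0)).symm
        rw [hsplit ps, hsplit (fun e => Function.update ps e0 (pmax e0) e)] at h
        have herase : ∑ e ∈ Finset.univ.erase e0, F e * Function.update ps e0 (pmax e0) e
            = ∑ e ∈ Finset.univ.erase e0, F e * ps e :=
          Finset.sum_congr rfl fun e he => by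
            rw [Function.update_of_ne (Finset.ne_of_mem_erase he)]
        rw [herase, Function.update_self] at h
        have hFneg : F e0 < 0 := by simp only [hF]; linarith
        nlinarith
      -- step 2 : some player sends positive flow on e0
      have hsumpos : 0 < ∑ i, xs i e0 := by
        have : (0:ℝ) < ((∑ i, xs i e0 : ℤ) : ℝ) := lt_of_le_of_lt (hu e0) hlt
        exact_mod_cast this
      have hex : ∃ i, 0 < xs i e0 := by
        by_contra hno
        push_neg at hno
        have : ∑ i, xs i e0 ≤ 0 := Finset.sum_nonpos fun i _ => hno i
        omega
      obtain ⟨i, hi⟩ := hex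
      -- step 3 : deviation to zero flow
      have hdev := hplayers i 0 (hz0 i)
      have hzero : ∑ e, (ps e - μ i e) * (((0 : E → ℤ) e : ℤ) : ℝ) = 0 :=
        Finset.sum_eq_zero fun e _ => by simp
      rw [hzero] at hdev
      -- step 4 : lower bound
      set M : ℝ := ⨆ e', μ i e' with hM
      set C : ℝ := ⨆ e', (c e' : ℝ) with hC
      have hbdd1 : BddAbove (Set.range fun e' => μ i e') :=
        Set.Finite.bddAbove (Set.finite_range _)
      have hbdd2 : BddAbove (Set.range fun e' => ((c e' : ℤ) : ℝ)) :=
        Set.Finite.bddAbove (Set.finite_range _)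
      have hMle : ∀ e, μ i e ≤ M := fun e => le_ciSup hbdd1 e
      have hCle : ∀ e, ((c e : ℤ) : ℝ) ≤ C := fun e => le_ciSup hbdd2 e
      have hMnn' : (0:ℝ) ≤ M := le_trans (hμ i e0) (hMle e0)
      have hCnn : (0:ℝ) ≤ C := le_trans (by exact_mod_cast hc e0) (hCle e0)
      have hub : ∑ e, μ i e * ((xs i e : ℤ) : ℝ) ≤ (Fintype.card E : ℝ) * M * C := by
        have h1 : ∑ e, μ i e * ((xs i e : ℤ) : ℝ) ≤ ∑ _e : E, M * C := by
          refine Finset.sum_le_sum fun e _ => ?_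
          have hx : ((xs i e : ℤ) : ℝ) ≤ C :=
            le_trans (by exact_mod_cast hxc i e) (hCle e)
          have hxn : (0:ℝ) ≤ ((xs i e : ℤ) : ℝ) := by exact_mod_cast hxnn i e
          exact mul_le_mul (hMle e) hx hxn hMnn'
        rw [Finset.sum_const, Finset.card_univ, nsmul_eq_mul] at h1
        linarith [h1]
      have hlb : ps e0 * ((xs i e0 : ℤ) : ℝ) ≤ ∑ e, ps e * ((xs i e : ℤ) : ℝ) := by
        refine Finset.single_le_sum (f := fun e => ps e * ((xs i e : ℤ) : ℝ))
          (fun e _ => mul_nonneg (hbox e).1 (by exact_mod_cast hxnn i e))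
          (Finset.mem_univ e0)
      have hx1 : (1:ℝ) ≤ ((xs i e0 : ℤ) : ℝ) := by exact_mod_cast hi
      have hpm0 : (0:ℝ) ≤ pmax e0 := le_trans (hbox e0).1 (hbox e0).2
      have hterm : pmax e0 ≤ ps e0 * ((xs i e0 : ℤ) : ℝ) := by
        calc pmax e0 = pmax e0 * 1 := by ring
        _ ≤ ps e0 * ((xs i e0 : ℤ) : ℝ) :=
          mul_le_mul hps0 hx1 zero_le_one (le_trans hpm0 hps0)
      have hsplit2 : ∑ e, (ps e - μ i e) * ((xs i e : ℤ) : ℝ)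
          = ∑ e, ps e * ((xs i e : ℤ) : ℝ) - ∑ e, μ i e * ((xs i e : ℤ) : ℝ) := by
        rw [← Finset.sum_sub_distrib]
        exact Finset.sum_congr rfl fun e _ => by ring
      have hpbig := hpmax i e0
      rw [hsplit2] at hdev
      rw [← hM] at hpbig
      linarith
    -- complementary slackness
    have hcs : ∀ e, ((∑ i, xs i e : ℤ) : ℝ) < u e → ps e = 0 := by
      intro e0 hlt
      by_contra hne
      have hpos : 0 < ps e0 := lt_of_le_of_ne (hbox e0).1 (Ne.symm hne)
      have hq : ∀ e, 0 ≤ Function.update ps e0 0 e ∧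
          Function.update ps e0 0 e ≤ pmax e := by
        intro e
        by_cases he : e = e0
        · subst he
          simp only [Function.update_self]
          exact ⟨le_refl 0, le_trans (hbox e).1 (hbox e).2⟩
        · rw [Function.update_of_ne he]
          exact hbox e
      have h := hauth _ hq
      set F : E → ℝ := fun e => u e - ((∑ i, xs i e : ℤ) : ℝ) with hF
      have hsplit : ∀ g : E → ℝ, ∑ e, F e * g e
          = F e0 * g e0 + ∑ e ∈ Finset.univ.erase e0, F e * g e := by
        intro g
        exact (Finset.add_sum_erase _ _ (Finset.mem_univ e0)).symm
      rw [hsplit ps, hsplit (fun e => Function.update ps e0 0 e)] at h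
      have herase : ∑ e ∈ Finset.univ.erase e0, F e * Function.update ps e0 0 e
          = ∑ e ∈ Finset.univ.erase e0, F e * ps e :=
        Finset.sum_congr rfl fun e he => by
          rw [Function.update_of_ne (Finset.ne_of_mem_erase he)]
      rw [herase, Function.update_self] at h
      have hFpos : 0 < F e0 := by simp only [hF]; linarith
      nlinarith
    refine ⟨hload, fun i => ⟨hfeas i, ?_⟩, hcs, hbox⟩
    intro z hz
    have h := hplayers i z hz
    rw [hflip i z, hflip i (xs i)] at h
    linarith
end

section
/- In the two-item, three-player game where X = { x ∈ ℤ^6_{≥0} : x_{11}+x_{21}+x_{31} ≤ 2, x_{i1}+x_{i2} = 1 for i = 1,2,3 }, with costs π₁(x) = 1 − x_{11} and π_i(x) = 1 − x_{i2} + x_{11} for i = 2,3, the inequality η₁ ≤ x_{11} + x_{21} + x_{31} is satisfied by every pair (x̄, π(x̄)) with x̄ a Nash equilibrium of the game (where η₁ is compared against player 1's cost π₁(x̄)). -/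
/-- in the two-item, three-player jointly constrained game, the
intersection cut η₁ ≤ x₁₁ + x₂₁ + x₃₁ is satisfied by (x̄, π(x̄)) for every
Nash equilibrium x̄. -/
theorem stmt_18
    (X : Set (Fin 3 → ℤ × ℤ))
    (hX : X = {x | (∀ i, 0 ≤ (x i).1 ∧ 0 ≤ (x i).2) ∧
      (∑ i, (x i).1) ≤ 2 ∧ ∀ i, (x i).1 + (x i).2 = 1})
    (π : Fin 3 → (Fin 3 → ℤ × ℤ) → ℝ)
    (hπ0 : ∀ x, π 0 x = 1 - ((x 0).1 : ℝ))
    (hπi : ∀ i : Fin 3, i ≠ 0 → ∀ x, π i x = 1 - ((x i).2 : ℝ) + ((x 0).1 : ℝ))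
    (xb : Fin 3 → ℤ × ℤ) (hxbX : xb ∈ X)
    (hNE : ∀ i, ∀ yi : ℤ × ℤ, Function.update xb i yi ∈ X →
      π i xb ≤ π i (Function.update xb i yi)) :
    π 0 xb ≤ ((xb 0).1 : ℝ) + ((xb 1).1 : ℝ) + ((xb 2).1 : ℝ) := by
  subst hX
  obtain ⟨hpos, hsum, heq⟩ := hxbX
  rw [hπ0]
  -- bounds
  have h0 : 0 ≤ (xb 0).1 := (hpos 0).1
  have h1 : 0 ≤ (xb 1).1 := (hpos 1).1
  have h2 : 0 ≤ (xb 2).1 := (hpos 2).1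
  by_cases hcase : 1 ≤ (xb 0).1
  · have : (1 : ℝ) ≤ ((xb 0).1 : ℝ) := by exact_mod_cast hcase
    have h1' : (0:ℝ) ≤ ((xb 1).1 : ℝ) := by exact_mod_cast h1
    have h2' : (0:ℝ) ≤ ((xb 2).1 : ℝ) := by exact_mod_cast h2
    linarith
  · push_neg at hcase
    have ha : (xb 0).1 = 0 := le_antisymm (by omega) h0
    by_cases hb : 1 ≤ (xb 1).1 + (xb 2).1
    swap
    · exfalso
      push_neg at hb
      have hupd : Function.update xb 0 ((1:ℤ),(0:ℤ)) ∈
          {x : Fin 3 → ℤ × ℤ | (∀ i, 0 ≤ (x i).1 ∧ 0 ≤ (x i).2) ∧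
            (∑ i, (x i).1) ≤ 2 ∧ ∀ i, (x i).1 + (x i).2 = 1} := by
        refine ⟨?_, ?_, ?_⟩
        · intro i
          by_cases hi : i = 0
          · subst hi; simp
          · rw [Function.update_of_ne hi]; exact hpos i
        · rw [Fin.sum_univ_three]
          simp [Function.update_of_ne (show (1:Fin 3) ≠ 0 by decide),
            Function.update_of_ne (show (2:Fin 3) ≠ 0 by decide)]
          omega
        · intro i
          by_cases hi : i = 0
          · subst hi; simp
          · rw [Function.update_of_ne hi]; exact heq i
      have := hNE 0 ((1:ℤ),(0:ℤ)) hupd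
      rw [hπ0, hπ0] at this
      simp [ha] at this
      linarith
    · have := h1
      have : (1:ℝ) ≤ ((xb 1).1 : ℝ) + ((xb 2).1 : ℝ) := by exact_mod_cast hb
      rw [ha]
      push_cast
      linarith
end
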